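/- Let u_a, u_b, u_c : [0,T] → ℝ be locally integrable functions and let ξ : [0,T] → ℝ be absolutely continuous with ξ(0) = 0 and ξ′(t) = u_a(t) + 2u_b(t)ξ(t) − u_c(t)ξ(t)² for almost every t (a particular solution of the Riccati equation). Set F(t) := exp(2∫₀^t (u_b(s) − u_c(s)ξ(s)) ds) and G(t) := ∫₀^t u_c(s)F(s) ds. Then for every y₀ ∈ ℝ and every T′ ∈ (0,T] such that 1 + y₀·G(t) ≠ 0 for all t ∈ [0,T′], the function y(t) := ξ(t) + y₀·F(t)/(1 + y₀·G(t)) is absolutely continuous on [0,T′], satisfies y(0) = y₀, and y′(t) = u_a(t) + 2u_b(t)·y(t) − u_c(t)·y(t)² for almost every t ∈ [0,T′]. -/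

import Mathlib

/-!
At every point where `ξ`, `F` and `G` are differentiable with `ξ' = u_a + 2u_bξ − u_cξ²`,
`F' = 2(u_b − u_cξ)F` and `G' = u_cF`, the quotient rule shows that
`y = ξ + y₀F/(1 + y₀G)` satisfies the Riccati equation; by Lebesgue's differentiation
theorem this holds almost everywhere. Moreover `ξ`, `F` and `G` are absolutely continuous
(primitives, possibly composed with `exp`), and so is `y`, because `z ↦ 1/(1 + y₀z)` is `C¹`
near the compact range of `G`, hence Lipschitz there. The integral form of the equation is then
the fundamental theorem of calculus for absolutely continuous functions.
-/

open MeasureTheory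

/-- `F(t) = exp(2∫₀^t (u_b(s) − u_c(s)ξ(s)) ds)`. -/
noncomputable def riccF (ub uc ξ : ℝ → ℝ) (t : ℝ) : ℝ :=
  Real.exp (2 * ∫ s in (0 : ℝ)..t, (ub s - uc s * ξ s))

/-- `G(t) = ∫₀^t u_c(s)·F(s) ds`. -/
noncomputable def riccG (ub uc ξ : ℝ → ℝ) (t : ℝ) : ℝ :=
  ∫ s in (0 : ℝ)..t, uc s * riccF ub uc ξ s

/-- The candidate general solution `y(t) = ξ(t) + y₀·F(t)/(1 + y₀·G(t))`. -/
noncomputable def riccY (ub uc ξ : ℝ → ℝ) (y₀ t : ℝ) : ℝ :=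
  ξ t + y₀ * riccF ub uc ξ t / (1 + y₀ * riccG ub uc ξ t)

open Set Filter Topology NNReal

section AbsolutelyContinuous

variable {a b : ℝ}

theorem AbsolutelyContinuousOnInterval.congr {X : Type*} [PseudoMetricSpace X] {f g : ℝ → X}
    (hf : AbsolutelyContinuousOnInterval f a b) (hfg : EqOn f g (uIcc a b)) :
    AbsolutelyContinuousOnInterval g a b := by
  refine Tendsto.congr' ?_ hf
  filter_upwards [mem_inf_of_right (mem_principal_self _)] with E hE
  exact Finset.sum_congr rfl fun i hi => by rw [hfg (hE.1 i hi).1, hfg (hE.1 i hi).2]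

theorem LipschitzOnWith.comp_absolutelyContinuousOnInterval {X Y : Type*} [PseudoMetricSpace X]
    [PseudoMetricSpace Y] {g : X → Y} {s : Set X} {K : ℝ≥0} {f : ℝ → X}
    (hg : LipschitzOnWith K g s) (hf : AbsolutelyContinuousOnInterval f a b)
    (hfs : MapsTo f (uIcc a b) s) : AbsolutelyContinuousOnInterval (g ∘ f) a b := by
  unfold AbsolutelyContinuousOnInterval at hf ⊢
  have hK := hf.const_mul (K : ℝ)
  rw [mul_zero] at hK
  refine squeeze_zero' (Eventually.of_forall fun E => Finset.sum_nonneg fun _ _ => dist_nonneg)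
    ?_ hK
  filter_upwards [mem_inf_of_right (mem_principal_self _)] with E hE
  rw [Finset.mul_sum]
  exact Finset.sum_le_sum fun i hi =>
    hg.dist_le_mul _ (hfs (hE.1 i hi).1) _ (hfs (hE.1 i hi).2)

theorem AbsolutelyContinuousOnInterval.comp_contDiffAt {E F : Type*} [NormedAddCommGroup E]
    [NormedSpace ℝ E] [NormedAddCommGroup F] [NormedSpace ℝ F] {f : ℝ → E} {g : E → F}
    (hf : AbsolutelyContinuousOnInterval f a b)
    (hg : ∀ x ∈ uIcc a b, ContDiffAt ℝ 1 g (f x)) :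
    AbsolutelyContinuousOnInterval (g ∘ f) a b := by
  have hg_loc : LocallyLipschitzOn (f '' uIcc a b) g := by
    rintro _ ⟨x, hx, rfl⟩
    obtain ⟨K, t, ht, hgt⟩ := (hg x hx).exists_lipschitzOnWith
    exact ⟨K, t, mem_nhdsWithin_of_mem_nhds ht, hgt⟩
  obtain ⟨K, hgK⟩ := hg_loc.exists_lipschitzOnWith_of_compact
    (isCompact_uIcc.image_of_continuousOn hf.continuousOn)
  exact hgK.comp_absolutelyContinuousOnInterval hf (mapsTo_image f _)

theorem AbsolutelyContinuousOnInterval.integral_eq_sub_of_ae_hasDerivAt {f f' : ℝ → ℝ}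
    (hf : AbsolutelyContinuousOnInterval f a b)
    (hf' : ∀ᵐ x, x ∈ uIcc a b → HasDerivAt f (f' x) x) :
    ∫ x in a..b, f' x = f b - f a := by
  rw [← hf.integral_deriv_eq_sub]
  refine intervalIntegral.integral_congr_ae ?_
  filter_upwards [hf'] with x hx hxab
  exact (hx (uIoc_subset_uIcc hxab)).deriv.symm

end AbsolutelyContinuous

theorem ae_hasDerivAt_of_eqOn_intervalIntegral {E : Type*} [NormedAddCommGroup E]
    [NormedSpace ℝ E] [CompleteSpace E] {f g : ℝ → E} {a b : ℝ}
    (hg : IntervalIntegrable g volume a b) (hf : EqOn f (fun x => ∫ t in a..x, g t) (uIcc a b)) :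
    ∀ᵐ x, x ∈ uIcc a b → HasDerivAt f (g x) x := by
  have ha : ∀ᵐ x, x ≠ a := by simp [ae_iff, measure_singleton]
  have hb : ∀ᵐ x, x ≠ b := by simp [ae_iff, measure_singleton]
  filter_upwards [hg.ae_hasDerivAt_integral, ha, hb] with x hx hxa hxb hxab
  have hnhds : uIcc a b ∈ 𝓝 x := by
    rcases le_total a b with h | h
    · rw [uIcc_of_le h] at hxab ⊢
      exact Icc_mem_nhds (hxab.1.lt_of_ne' hxa) (hxab.2.lt_of_ne hxb)
    · rw [uIcc_of_ge h] at hxab ⊢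
      exact Icc_mem_nhds (hxab.1.lt_of_ne' hxb) (hxab.2.lt_of_ne hxa)
  exact (hx hxab a left_mem_uIcc).congr_of_eventuallyEq (eventually_of_mem hnhds hf)

section Riccati

variable {ua ub uc ξ : ℝ → ℝ} {y₀ T : ℝ}

theorem riccY_zero (hξ : ξ 0 = 0) : riccY ub uc ξ y₀ 0 = y₀ := by
  simp [riccY, riccF, riccG, hξ]

theorem hasDerivAt_riccY {x : ℝ}
    (hξ : HasDerivAt ξ (ua x + 2 * ub x * ξ x - uc x * ξ x ^ 2) x)
    (hF : HasDerivAt (riccF ub uc ξ) (riccF ub uc ξ x * (2 * (ub x - uc x * ξ x))) x)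
    (hG : HasDerivAt (riccG ub uc ξ) (uc x * riccF ub uc ξ x) x)
    (hH : 1 + y₀ * riccG ub uc ξ x ≠ 0) :
    HasDerivAt (riccY ub uc ξ y₀)
      (ua x + 2 * ub x * riccY ub uc ξ y₀ x - uc x * riccY ub uc ξ y₀ x ^ 2) x := by
  refine (hξ.add ((hF.const_mul y₀).div ((hG.const_mul y₀).const_add 1) hH)).congr_deriv ?_
  simp only [riccY]
  field_simp
  ring

theorem absolutelyContinuousOnInterval_riccF
    (h : IntervalIntegrable (fun s => ub s - uc s * ξ s) volume 0 T) :
    AbsolutelyContinuousOnInterval (riccF ub uc ξ) 0 T :=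
  ((h.absolutelyContinuousOnInterval_intervalIntegral left_mem_uIcc).const_mul 2).comp_contDiffAt
    (g := Real.exp) fun _ _ => Real.contDiff_exp.contDiffAt

theorem ae_hasDerivAt_riccF
    (h : IntervalIntegrable (fun s => ub s - uc s * ξ s) volume 0 T) :
    ∀ᵐ x, x ∈ uIcc 0 T →
      HasDerivAt (riccF ub uc ξ) (riccF ub uc ξ x * (2 * (ub x - uc x * ξ x))) x := by
  filter_upwards [h.ae_hasDerivAt_integral] with x hx hxT
  exact ((hx hxT 0 left_mem_uIcc).const_mul 2).exp

theorem absolutelyContinuousOnInterval_riccY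
    (hξ : AbsolutelyContinuousOnInterval ξ 0 T)
    (hF : AbsolutelyContinuousOnInterval (riccF ub uc ξ) 0 T)
    (hG : AbsolutelyContinuousOnInterval (riccG ub uc ξ) 0 T)
    (hH : ∀ t ∈ uIcc 0 T, 1 + y₀ * riccG ub uc ξ t ≠ 0) :
    AbsolutelyContinuousOnInterval (riccY ub uc ξ y₀) 0 T := by
  have hinv := hG.comp_contDiffAt (g := fun z => (1 + y₀ * z)⁻¹) fun t ht =>
    (contDiffAt_const.add (contDiffAt_const.mul contDiffAt_id)).inv (hH t ht)
  have hY : riccY ub uc ξ y₀ =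
      fun t => ξ t + y₀ * riccF ub uc ξ t * (1 + y₀ * riccG ub uc ξ t)⁻¹ := by
    funext t
    simp only [riccY, div_eq_mul_inv]
  rw [hY]
  exact hξ.fun_add ((hF.const_mul y₀).fun_mul hinv)

theorem absolutelyContinuousOnInterval_riccY_and_ae_hasDerivAt
    (hua : IntervalIntegrable ua volume 0 T) (hub : IntervalIntegrable ub volume 0 T)
    (huc : IntervalIntegrable uc volume 0 T)
    (hξc : ContinuousOn ξ (uIcc 0 T))
    (hξ : EqOn ξ (fun t => ∫ s in (0 : ℝ)..t, (ua s + 2 * ub s * ξ s - uc s * ξ s ^ 2))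
      (uIcc 0 T))
    (hH : ∀ t ∈ uIcc 0 T, 1 + y₀ * riccG ub uc ξ t ≠ 0) :
    AbsolutelyContinuousOnInterval (riccY ub uc ξ y₀) 0 T ∧
      ∀ᵐ x, x ∈ uIcc 0 T → HasDerivAt (riccY ub uc ξ y₀)
        (ua x + 2 * ub x * riccY ub uc ξ y₀ x - uc x * riccY ub uc ξ y₀ x ^ 2) x := by
  have hξi : IntervalIntegrable (fun s => ua s + 2 * ub s * ξ s - uc s * ξ s ^ 2) volume 0 T :=
    (hua.add ((hub.const_mul 2).mul_continuousOn hξc)).sub (huc.mul_continuousOn (hξc.pow 2))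
  have hexponent : IntervalIntegrable (fun s => ub s - uc s * ξ s) volume 0 T :=
    hub.sub (huc.mul_continuousOn hξc)
  have hF := absolutelyContinuousOnInterval_riccF hexponent
  have hucF : IntervalIntegrable (fun s => uc s * riccF ub uc ξ s) volume 0 T :=
    huc.mul_continuousOn hF.continuousOn
  refine ⟨absolutelyContinuousOnInterval_riccY
    ((hξi.absolutelyContinuousOnInterval_intervalIntegral left_mem_uIcc).congr hξ.symm) hF
    (hucF.absolutelyContinuousOnInterval_intervalIntegral left_mem_uIcc) hH, ?_⟩
  filter_upwards [ae_hasDerivAt_of_eqOn_intervalIntegral hξi hξ, ae_hasDerivAt_riccF hexponent,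
    hucF.ae_hasDerivAt_integral] with x hξx hFx hGx hx
  exact hasDerivAt_riccY (hξx hx) (hFx hx) (hGx hx 0 left_mem_uIcc) (hH x hx)

end Riccati

theorem riccati_general_solution_general (T : ℝ) (ua ub uc ξ : ℝ → ℝ)
    (hua : IntegrableOn ua (Set.Icc (0 : ℝ) T))
    (hub : IntegrableOn ub (Set.Icc (0 : ℝ) T))
    (huc : IntegrableOn uc (Set.Icc (0 : ℝ) T))
    (hξcont : ContinuousOn ξ (Set.Icc (0 : ℝ) T))
    (hξ : ∀ t ∈ Set.Icc (0 : ℝ) T,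
      ξ t = ∫ s in (0 : ℝ)..t, (ua s + 2 * ub s * ξ s - uc s * ξ s ^ 2)) :
    ∀ y₀ T' : ℝ, 0 < T' → T' ≤ T →
      (∀ t ∈ Set.Icc (0 : ℝ) T', 1 + y₀ * riccG ub uc ξ t ≠ 0) →
      riccY ub uc ξ y₀ 0 = y₀ ∧
      (∀ t ∈ Set.Icc (0 : ℝ) T',
        riccY ub uc ξ y₀ t = y₀ +
          ∫ s in (0 : ℝ)..t,
            (ua s + 2 * ub s * riccY ub uc ξ y₀ s - uc s * riccY ub uc ξ y₀ s ^ 2)) ∧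
      (∀ᵐ t ∂(volume.restrict (Set.Icc (0 : ℝ) T')),
        HasDerivAt (riccY ub uc ξ y₀)
          (ua t + 2 * ub t * riccY ub uc ξ y₀ t - uc t * riccY ub uc ξ y₀ t ^ 2) t) := by
  intro y₀ T' hT' hT'T hH
  have hIcc : Icc 0 T' = uIcc 0 T' := (uIcc_of_le hT'.le).symm
  have hsub : uIcc 0 T' ⊆ Icc 0 T := hIcc ▸ Icc_subset_Icc le_rfl hT'T
  have hii {u : ℝ → ℝ} (hu : IntegrableOn u (Icc 0 T)) : IntervalIntegrable u volume 0 T' :=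
    (hu.mono_set hsub).intervalIntegrable
  rw [hIcc] at hH ⊢
  obtain ⟨hY_ac, hY_deriv⟩ := absolutelyContinuousOnInterval_riccY_and_ae_hasDerivAt
    (hii hua) (hii hub) (hii huc) (hξcont.mono hsub) (fun t ht => hξ t (hsub ht)) hH
  have hY0 : riccY ub uc ξ y₀ 0 = y₀ := riccY_zero (by simpa using hξ 0 (hsub left_mem_uIcc))
  refine ⟨hY0, fun t ht => ?_, (ae_restrict_iff' measurableSet_uIcc).2 hY_deriv⟩
  rw [(hY_ac.mono (uIcc_subset_uIcc_left ht)).integral_eq_sub_of_ae_hasDerivAt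
    (hY_deriv.mono fun x hx hxt => hx (uIcc_subset_uIcc_left ht hxt)), hY0]
  ring

/-- Let `u_a, u_b, u_c` be integrable on `[0,T]` and let `ξ` be an absolutely
continuous particular solution of the Riccati equation with `ξ(0) = 0`
(expressed through the integral identity `ξ(t) = ∫₀^t (u_a + 2u_b·ξ − u_c·ξ²)`,
together with continuity of `ξ`).  Then for every `y₀` and every `T′ ∈ (0,T]`
with `1 + y₀·G(t) ≠ 0` on `[0,T′]`, the function `y = ξ + y₀·F/(1 + y₀·G)`
satisfies `y(0) = y₀`, is absolutely continuous on `[0,T′]` — expressed by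
`y(t) = y₀ + ∫₀^t (u_a + 2u_b·y − u_c·y²)` — and satisfies
`y′(t) = u_a(t) + 2u_b(t)·y(t) − u_c(t)·y(t)²` almost everywhere on `[0,T′]`. -/
theorem riccati_general_solution (T : ℝ) (hT : 0 < T) (ua ub uc ξ : ℝ → ℝ)
    (hua : IntegrableOn ua (Set.Icc (0 : ℝ) T))
    (hub : IntegrableOn ub (Set.Icc (0 : ℝ) T))
    (huc : IntegrableOn uc (Set.Icc (0 : ℝ) T))
    (hξcont : ContinuousOn ξ (Set.Icc (0 : ℝ) T))
    (hξ : ∀ t ∈ Set.Icc (0 : ℝ) T,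
      ξ t = ∫ s in (0 : ℝ)..t, (ua s + 2 * ub s * ξ s - uc s * ξ s ^ 2)) :
    ∀ y₀ T' : ℝ, 0 < T' → T' ≤ T →
      (∀ t ∈ Set.Icc (0 : ℝ) T', 1 + y₀ * riccG ub uc ξ t ≠ 0) →
      riccY ub uc ξ y₀ 0 = y₀ ∧
      (∀ t ∈ Set.Icc (0 : ℝ) T',
        riccY ub uc ξ y₀ t = y₀ +
          ∫ s in (0 : ℝ)..t,
            (ua s + 2 * ub s * riccY ub uc ξ y₀ s - uc s * riccY ub uc ξ y₀ s ^ 2)) ∧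
      (∀ᵐ t ∂(volume.restrict (Set.Icc (0 : ℝ) T')),
        HasDerivAt (riccY ub uc ξ y₀)
          (ua t + 2 * ub t * riccY ub uc ξ y₀ t - uc t * riccY ub uc ξ y₀ t ^ 2) t) :=
  riccati_general_solution_general T ua ub uc ξ hua hub huc hξcont hξ
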